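/- arXiv:1409.8350 — 2 statements merged into one kernel-verified Lean document; each statement's English description precedes it below -/
import Mathlib

section
/- Assume −1 ∈ C₀ and that the Gauss periods η_a, 0 ≤ a ≤ N−1, take exactly three rational values α₁, α₂, α₃. Let I_i = {a ∈ ℤ_N : η_a = α_i}, and define R₀ = {0}, R_j = ⋃_{i ∈ I_j} γ^i C₀ for j = 1, 2, 3 (a partition of F_q). If |I₁| = 1 or |I₃| = 1, then the relations 𝓡_j = {(x,y) ∈ F_q × F_q : x − y ∈ R_j} form a symmetric three-class association scheme on F_q: each 𝓡_j is symmetric, and for all j, l, m ∈ {0,1,2,3} there exists an integer p_{jl}^m such that for every pair (x,y) with x − y ∈ R_m, the number of z ∈ F_q with x − z ∈ R_j and z − y ∈ R_l equals p_{jl}^m. -/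
/-!
Write `T_i(b) = ∑_{a ∈ I_i} η_{a+b}`. Orthogonality of `ψ` gives `∑_i T_i(b) = -1` and, because
`-1 ∈ C₀`, `∑_i α_i T_i(b) = q [b = 0] - (q - 1) / N`; if `I_s = {t}` then moreover
`T_s(b) = η_{t+b}`. As the `α_i` are distinct, these three equations determine `T(b)` from the
class of `t + b` alone (which also decides whether `b = 0`).

With `log c` the index of the cyclotomic class of `c`, the Fourier transform of `R_i` at `c ≠ 0`
is `T_i(log c)`, so the transforms of the `R_i` are constant on the classes of the dual partition
`c ↦ class of t + log c`, and symmetrically the transforms of the dual classes are constant on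
the `R_m`. Expanding `#{z | x - z ∈ R_j, z - y ∈ R_l}` by Fourier inversion and grouping the
frequencies by dual class then shows that it depends only on the class of `x - y`.
-/

open Finset Function

theorem exists_isPrimitive_addChar_eq_pow_trace {p : ℕ} [Fact p.Prime] {F : Type*} [Field F]
    [Fintype F] [Algebra (ZMod p) F] {ζ : ℂ} (hζ : IsPrimitiveRoot ζ p) :
    ∃ Ψ : AddChar F ℂ, Ψ.IsPrimitive ∧ ∀ x, Ψ x = ζ ^ (Algebra.trace (ZMod p) F x).val := by
  refine ⟨(AddChar.zmodChar p hζ.pow_eq_one).compAddMonoidHom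
    (Algebra.trace (ZMod p) F).toAddMonoidHom, AddChar.IsPrimitive.of_ne_one ?_, fun x => rfl⟩
  obtain ⟨x, hx⟩ := Algebra.trace_surjective (ZMod p) F 1
  have hp : 1 < p := (Fact.out : p.Prime).one_lt
  have : Fact (1 < p) := ⟨hp⟩
  refine AddChar.ne_one_iff.mpr ⟨x, ?_⟩
  change ζ ^ (Algebra.trace (ZMod p) F x).val ≠ 1
  rw [hx, ZMod.val_one, pow_one]
  exact hζ.ne_one hp

section TranslationScheme

variable {R : Type*} [CommRing R] [Fintype R] [DecidableEq R] {ψ : AddChar R ℂ}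
  {κ κ' : Type*} [DecidableEq κ] [DecidableEq κ']

def fiberTransform (ψ : AddChar R ℂ) (ρ : R → κ) (k : κ) (c : R) : ℂ :=
  ∑ x with ρ x = k, ψ (x * c)

theorem card_mul_card_filter_sub_eq (hψ : ψ.IsPrimitive) (ρ : R → κ) (j l : κ) (d : R) :
    (Fintype.card R : ℂ) * #{w | ρ (d - w) = j ∧ ρ w = l} =
      ∑ c, fiberTransform ψ ρ j c * fiberTransform ψ ρ l c * ψ (c * -d) := by
  have hterm (c : R) : fiberTransform ψ ρ j c * fiberTransform ψ ρ l c * ψ (c * -d) =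
      ∑ w with ρ w = l, ∑ u with ρ u = j, ψ (c * (u - (d - w))) := by
    simp only [fiberTransform, sum_mul, mul_sum]
    refine sum_congr rfl fun w _ => sum_congr rfl fun u _ => ?_
    rw [← AddChar.map_add_eq_mul, ← AddChar.map_add_eq_mul]
    ring_nf
  simp_rw [hterm]
  rw [sum_comm]
  have hinner (w : R) : ∑ c, ∑ u with ρ u = j, ψ (c * (u - (d - w))) =
      if ρ (d - w) = j then (Fintype.card R : ℂ) else 0 := by
    rw [sum_comm]
    simp [AddChar.sum_mulShift _ hψ, sub_eq_zero]
  simp_rw [hinner]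
  rw [← sum_filter, sum_const, nsmul_eq_mul, mul_comm, filter_filter]
  simp_rw [and_comm]

theorem card_filter_sub_factorsThrough (hψ : ψ.IsPrimitive) [Fintype κ'] (ρ : R → κ) (ρ' : R → κ')
    (hneg : ∀ x, ρ (-x) = ρ x)
    (hρ : ∀ k, (fiberTransform ψ ρ k).FactorsThrough ρ')
    (hρ' : ∀ k', (fiberTransform ψ ρ' k').FactorsThrough ρ) (j l : κ) :
    (fun d => #{w | ρ (d - w) = j ∧ ρ w = l}).FactorsThrough ρ := by
  intro d d' hd
  suffices h : ∀ e, (Fintype.card R : ℂ) * #{w | ρ (e - w) = j ∧ ρ w = l} =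
      ∑ k', extend ρ' (fiberTransform ψ ρ j) 0 k' * extend ρ' (fiberTransform ψ ρ l) 0 k' *
        extend ρ (fiberTransform ψ ρ' k') 0 (ρ e) by
    have hR : (Fintype.card R : ℂ) ≠ 0 := Nat.cast_ne_zero.mpr Fintype.card_ne_zero
    exact_mod_cast mul_left_cancel₀ hR ((h d).trans (hd ▸ (h d').symm))
  intro e
  rw [card_mul_card_filter_sub_eq hψ, ← sum_fiberwise univ ρ']
  refine sum_congr rfl fun k' _ => ?_
  calc ∑ c with ρ' c = k', fiberTransform ψ ρ j c * fiberTransform ψ ρ l c * ψ (c * -e)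
      = ∑ c with ρ' c = k', extend ρ' (fiberTransform ψ ρ j) 0 k' *
          extend ρ' (fiberTransform ψ ρ l) 0 k' * ψ (c * -e) := by
        refine sum_congr rfl fun c hc => ?_
        rw [← (mem_filter.mp hc).2, (hρ j).extend_apply, (hρ l).extend_apply]
    _ = _ := by
        rw [← mul_sum, ← hneg, (hρ' k').extend_apply]
        rfl

end TranslationScheme

theorem exists_forall_eq_of_card_eq_one {X κ : Type*} {τ : X → κ} {I : Finset X} {k : κ}
    (hI : ∀ a, a ∈ I ↔ τ a = k) (h : #I = 1) : ∃ t, ∀ a, τ a = τ t → a = t := by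
  obtain ⟨t, rfl⟩ := card_eq_one.mp h
  refine ⟨t, fun a ha => ?_⟩
  simpa using (hI a).mpr (ha.trans ((hI t).mp (mem_singleton_self t)))

theorem natCard_sub_eq_card_filter {G κ : Type*} [AddCommGroup G] [Fintype G] [DecidableEq κ]
    (ρ : G → κ) (j l : κ) (x y : G) :
    Nat.card {z : G // ρ (x - z) = j ∧ ρ (z - y) = l} = #{w | ρ (x - y - w) = j ∧ ρ w = l} := by
  rw [Nat.card_eq_fintype_card, Fintype.card_subtype]
  refine card_equiv (Equiv.subRight y) fun z => ?_
  simp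

theorem symmetric_scheme_of_label {G κ : Type*} [AddCommGroup G] [Fintype G] [DecidableEq κ]
    (R : κ → Set G) (ρ : G → κ) (hR : ∀ j x, x ∈ R j ↔ ρ x = j) (hneg : ∀ x, ρ (-x) = ρ x)
    (hcount : ∀ j l, (fun d => #{w | ρ (d - w) = j ∧ ρ w = l}).FactorsThrough ρ) :
    (∀ j x y, x - y ∈ R j → y - x ∈ R j) ∧
      ∀ j l m, ∃ c : ℕ, ∀ x y, x - y ∈ R m → Nat.card {z // x - z ∈ R j ∧ z - y ∈ R l} = c := by
  refine ⟨fun j x y hxy => ?_, fun j l m =>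
    ⟨extend ρ (fun d => #{w | ρ (d - w) = j ∧ ρ w = l}) 0 m, fun x y hxy => ?_⟩⟩
  · rwa [hR, ← neg_sub, hneg, ← hR]
  · simp only [hR]
    rw [natCard_sub_eq_card_filter, ← (hR m _).mp hxy, (hcount j l).extend_apply]

section GaussPeriod

variable {F : Type*} [Field F] [Fintype F] [DecidableEq F] {ψ : AddChar F ℂ}
  {A : Type*} [DecidableEq A] {χ : F → A}

def cyclotomicClass (χ : F → A) (a : A) : Finset F := {x | x ≠ 0 ∧ χ x = a}

def gaussPeriod (ψ : AddChar F ℂ) (χ : F → A) (a : A) : ℂ := ∑ x ∈ cyclotomicClass χ a, ψ x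

theorem mul_mem_cyclotomicClass_iff [AddCommGroup A]
    (hχ : ∀ x y, x ≠ 0 → y ≠ 0 → χ (x * y) = χ x + χ y)
    {c : F} (hc : c ≠ 0) {x : F} {a : A} :
    x * c ∈ cyclotomicClass χ (a + χ c) ↔ x ∈ cyclotomicClass χ a := by
  simp only [cyclotomicClass, mem_filter, mem_univ, true_and, ne_eq, mul_eq_zero, hc, or_false]
  refine and_congr_right fun hx => ?_
  rw [hχ x c hx hc, add_left_inj]

theorem sum_cyclotomicClass_mul [AddCommGroup A]
    (hχ : ∀ x y, x ≠ 0 → y ≠ 0 → χ (x * y) = χ x + χ y)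
    {c : F} (hc : c ≠ 0) (a : A) :
    ∑ x ∈ cyclotomicClass χ a, ψ (x * c) = gaussPeriod ψ χ (a + χ c) :=
  sum_equiv (Equiv.mulRight₀ c hc) (fun _ => (mul_mem_cyclotomicClass_iff hχ hc).symm)
    fun _ _ => rfl

theorem card_cyclotomicClass [AddCommGroup A]
    (hχ : ∀ x y, x ≠ 0 → y ≠ 0 → χ (x * y) = χ x + χ y)
    (hsurj : ∀ b, ∃ w ≠ 0, χ w = b) (b : A) :
    #(cyclotomicClass χ b) = #(cyclotomicClass χ 0) := by
  obtain ⟨w, hw, rfl⟩ := hsurj b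
  refine (card_equiv (Equiv.mulRight₀ w hw) fun x => ?_).symm
  rw [← mul_mem_cyclotomicClass_iff hχ hw, zero_add]
  rfl

theorem sum_sum_cyclotomicClass [Fintype A] (f : A → F → ℂ) :
    ∑ a, ∑ x ∈ cyclotomicClass χ a, f a x = ∑ x with x ≠ 0, f (χ x) x := by
  rw [← sum_fiberwise _ χ]
  refine sum_congr rfl fun a _ => ?_
  rw [cyclotomicClass, ← filter_filter]
  exact sum_congr rfl fun x hx => by rw [(mem_filter.mp hx).2]

theorem sum_ne_zero_mulShift (hψ : ψ.IsPrimitive) (u : F) :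
    ∑ x with x ≠ 0, ψ (x * u) = if u = 0 then (Fintype.card F : ℂ) - 1 else -1 := by
  rw [filter_ne', sum_erase_eq_sub (mem_univ 0), AddChar.sum_mulShift _ hψ, zero_mul,
    AddChar.map_zero_eq_one]
  split_ifs <;> simp

theorem sum_gaussPeriod_add [AddCommGroup A] [Fintype A] (hψ : ψ.IsPrimitive) (b : A) :
    ∑ a, gaussPeriod ψ χ (a + b) = -1 := by
  rw [Fintype.sum_equiv (Equiv.addRight b) (fun a => gaussPeriod ψ χ (a + b)) _ fun _ => rfl]
  simpa [gaussPeriod, sum_sum_cyclotomicClass (fun _ x => ψ x)] using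
    sum_ne_zero_mulShift hψ (1 : F)

theorem sum_gaussPeriod_mul_gaussPeriod_add [AddCommGroup A] [Fintype A] (hψ : ψ.IsPrimitive)
    (hχ : ∀ x y, x ≠ 0 → y ≠ 0 → χ (x * y) = χ x + χ y) (hneg : χ (-1) = 0)
    (hsurj : ∀ b, ∃ w ≠ 0, χ w = b) (b : A) :
    ∑ a, gaussPeriod ψ χ a * gaussPeriod ψ χ (a + b) =
      (if b = 0 then (Fintype.card F : ℂ) else 0) - #(cyclotomicClass χ 0) := by
  have hshift (x : F) (hx : x ≠ 0) :
      gaussPeriod ψ χ (χ x + b) = ∑ w ∈ cyclotomicClass χ b, ψ (w * x) := by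
    rw [sum_cyclotomicClass_mul hχ hx, add_comm]
  calc ∑ a, gaussPeriod ψ χ a * gaussPeriod ψ χ (a + b)
      = ∑ x with x ≠ 0, ψ x * gaussPeriod ψ χ (χ x + b) := by
        simp only [gaussPeriod, sum_mul]
        exact sum_sum_cyclotomicClass fun a x => ψ x * gaussPeriod ψ χ (a + b)
    _ = ∑ w ∈ cyclotomicClass χ b, ∑ x with x ≠ 0, ψ (x * (1 + w)) := by
        rw [← sum_comm]
        refine sum_congr rfl fun x hx => ?_
        rw [hshift x (mem_filter.mp hx).2, mul_sum]
        refine sum_congr rfl fun w _ => ?_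
        rw [← AddChar.map_add_eq_mul]
        ring_nf
    _ = ∑ w ∈ cyclotomicClass χ b, ((if w = -1 then (Fintype.card F : ℂ) else 0) - 1) := by
        refine sum_congr rfl fun w _ => ?_
        have hw : 1 + w = 0 ↔ w = -1 := ⟨fun h => by linear_combination h, fun h => by simp [h]⟩
        simp only [sum_ne_zero_mulShift hψ, hw]
        split_ifs <;> ring
    _ = _ := by
        have hmem : (-1 : F) ∈ cyclotomicClass χ b ↔ b = 0 := by
          simp [cyclotomicClass, hneg, eq_comm]
        rw [sum_sub_distrib, sum_ite_eq', if_congr hmem rfl rfl, sum_const,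
          card_cyclotomicClass hχ hsurj]
        simp

end GaussPeriod

theorem eq_of_sum_eq_of_sum_mul_eq {K : Type*} [Field K] {α T T' : Fin 3 → K}
    (hα : Injective α) (s : Fin 3) (hsum : ∑ i, T i = ∑ i, T' i)
    (hwsum : ∑ i, α i * T i = ∑ i, α i * T' i) (hs : T s = T' s) : T = T' := by
  funext i
  obtain rfl | hi := eq_or_ne i s
  · exact hs
  obtain ⟨k, hki, hcover⟩ : ∃ k, k ≠ i ∧ ∀ j, j ≠ i → j = s ∨ j = k := by
    fin_cases s <;> fin_cases i <;> simp at hi ⊢ <;> decide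
  have hD : ∑ j, (α j - α k) * (T j - T' j) = 0 := by
    simp only [sub_mul, mul_sub, sum_sub_distrib, ← mul_sum]
    linear_combination hwsum - α k * hsum
  rw [sum_eq_single i (fun j _ hj => ?_) (by simp)] at hD
  · exact sub_eq_zero.mp ((mul_eq_zero.mp hD).resolve_left (sub_ne_zero.mpr (hα.ne hki.symm)))
  · rcases hcover j hj with rfl | rfl <;> simp [hs]

section ShiftedClassSum

variable {A : Type*} [AddCommGroup A] [Fintype A] [DecidableEq A] {τ : A → Fin 3} {η : A → ℂ}

def shiftedClassSum (τ : A → Fin 3) (η : A → ℂ) (i : Fin 3) (b : A) : ℂ :=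
  ∑ a with τ a = i, η (a + b)

theorem shiftedClassSum_factorsThrough {α : Fin 3 → ℂ} (hα : Injective α)
    (hη : ∀ a, η a = α (τ a)) (hsum : ∀ b, ∑ a, η (a + b) = -1) {Q K : ℂ}
    (hcorr : ∀ b, ∑ a, η a * η (a + b) = (if b = 0 then Q else 0) - K)
    {t : A} (ht : ∀ a, τ a = τ t → a = t) (i : Fin 3) :
    (shiftedClassSum τ η i).FactorsThrough fun b => τ (t + b) := by
  have hzero (b : A) : b = 0 ↔ τ (t + b) = τ t :=
    ⟨fun h => by rw [h, add_zero], fun h => by simpa using ht _ h⟩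
  have hT (b : A) : ∑ i, shiftedClassSum τ η i b = -1 := by
    rw [← hsum b]; exact sum_fiberwise univ τ _
  have hαT (b : A) : ∑ i, α i * shiftedClassSum τ η i b = (if b = 0 then Q else 0) - K := by
    rw [← hcorr b, ← sum_fiberwise univ τ]
    refine sum_congr rfl fun i _ => ?_
    rw [shiftedClassSum, mul_sum]
    exact sum_congr rfl fun a ha => by rw [hη a, (mem_filter.mp ha).2]
  have hTt (b : A) : shiftedClassSum τ η (τ t) b = α (τ (t + b)) := by
    have hfib : ({a | τ a = τ t} : Finset A) = {t} := by
      ext a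
      simpa using ⟨ht a, fun h => h ▸ rfl⟩
    rw [shiftedClassSum, hfib, sum_singleton, hη]
  intro b b' (hbb' : τ (t + b) = τ (t + b'))
  refine congrFun (eq_of_sum_eq_of_sum_mul_eq hα (τ t) ((hT b).trans (hT b').symm) ?_ ?_) i
  · rw [hαT, hαT, if_congr ((hzero b).trans (hbb' ▸ hzero b').symm) rfl rfl]
  · simp only [hTt, hbb']

end ShiftedClassSum

section CyclotomicScheme

variable {F : Type*} [Field F] [DecidableEq F] {ψ : AddChar F ℂ}
  {A : Type*} [AddCommGroup A] {χ : F → A}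

/-- With `t = 0` this labels the relations `R_0, …, R_n` of the scheme; with `t` the index of a
singleton class it labels the dual partition. -/
def cyclotomicLabel {n : ℕ} (χ : F → A) (τ : A → Fin n) (t : A) (x : F) : Fin (n + 1) :=
  if x = 0 then 0 else (τ (t + χ x)).succ

theorem cyclotomicLabel_eq_zero_iff {n : ℕ} {τ : A → Fin n} {t : A} {x : F} :
    cyclotomicLabel χ τ t x = 0 ↔ x = 0 := by
  unfold cyclotomicLabel
  split_ifs with hx <;> simp [hx, Fin.succ_ne_zero]

theorem fiberTransform_cyclotomicLabel_zero [Fintype F] {n : ℕ} (τ : A → Fin n) (t : A) (c : F) :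
    fiberTransform ψ (cyclotomicLabel χ τ t) 0 c = 1 := by
  have hfib : ({x | cyclotomicLabel χ τ t x = 0} : Finset F) = {0} := by
    ext x; simp [cyclotomicLabel_eq_zero_iff]
  rw [fiberTransform, hfib, sum_singleton, zero_mul, AddChar.map_zero_eq_one]

theorem fiberTransform_cyclotomicLabel_succ [Fintype F] [Fintype A] [DecidableEq A]
    (hχ : ∀ x y, x ≠ 0 → y ≠ 0 → χ (x * y) = χ x + χ y)
    (τ : A → Fin 3) (t : A) {c : F} (hc : c ≠ 0) (i : Fin 3) :
    fiberTransform ψ (cyclotomicLabel χ τ t) i.succ c =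
      shiftedClassSum τ (gaussPeriod ψ χ) i (χ c - t) := by
  calc fiberTransform ψ (cyclotomicLabel χ τ t) i.succ c
      = ∑ x with x ≠ 0, if τ (t + χ x) = i then ψ (x * c) else 0 := by
        rw [fiberTransform, ← sum_filter, filter_filter]
        congr 1
        ext x
        simp only [mem_filter, mem_univ, true_and]
        by_cases hx : x = 0 <;> simp [cyclotomicLabel, hx, (Fin.succ_ne_zero i).symm]
    _ = ∑ a, if τ (t + a) = i then gaussPeriod ψ χ (a + χ c) else 0 := by
        rw [← sum_sum_cyclotomicClass (fun a x => if τ (t + a) = i then ψ (x * c) else 0)]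
        refine sum_congr rfl fun a _ => ?_
        rw [← sum_cyclotomicClass_mul hχ hc]
        split_ifs <;> simp
    _ = shiftedClassSum τ (gaussPeriod ψ χ) i (χ c - t) := by
        rw [shiftedClassSum, sum_filter]
        refine Fintype.sum_equiv (Equiv.addLeft t) _ _ fun a => ?_
        simp only [Equiv.coe_addLeft]
        congr 2; abel

theorem cyclotomicLabel_of_ne_zero {n : ℕ} {τ : A → Fin n} {t : A} {x : F} (hx : x ≠ 0) :
    cyclotomicLabel χ τ t x = (τ (t + χ x)).succ :=
  if_neg hx

theorem cyclotomicLabel_neg (hχ : ∀ x y, x ≠ 0 → y ≠ 0 → χ (x * y) = χ x + χ y)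
    (hneg : χ (-1) = 0) {n : ℕ} {τ : A → Fin n} {t : A} (x : F) :
    cyclotomicLabel χ τ t (-x) = cyclotomicLabel χ τ t x := by
  obtain rfl | hx := eq_or_ne x 0
  · rw [neg_zero]
  have hχneg : χ (-x) = χ x := by
    rw [← neg_one_mul, hχ _ _ (neg_ne_zero.mpr one_ne_zero) hx, hneg, zero_add]
  rw [cyclotomicLabel_of_ne_zero hx, cyclotomicLabel_of_ne_zero (neg_ne_zero.mpr hx), hχneg]

theorem fiberTransform_cyclotomicLabel_factorsThrough [Fintype F] [Fintype A] [DecidableEq A]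
    (hχ : ∀ x y, x ≠ 0 → y ≠ 0 → χ (x * y) = χ x + χ y) (τ : A → Fin 3) (t : A) {κ : Type*}
    {μ : F → κ} (hμ : ∀ c c', μ c = μ c' → (c = 0 ↔ c' = 0))
    (hT : ∀ i c c', c ≠ 0 → c' ≠ 0 → μ c = μ c' →
      shiftedClassSum τ (gaussPeriod ψ χ) i (χ c - t) =
        shiftedClassSum τ (gaussPeriod ψ χ) i (χ c' - t))
    (k : Fin 4) : (fiberTransform ψ (cyclotomicLabel χ τ t) k).FactorsThrough μ := by
  intro c c' hcc'
  by_cases hc : c = 0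
  · rw [hc, ((hμ c c' hcc').mp hc).symm]
  have hc' : c' ≠ 0 := fun h => hc ((hμ c c' hcc').mpr h)
  cases k using Fin.cases with
  | zero => simp only [fiberTransform_cyclotomicLabel_zero]
  | succ i =>
    rw [fiberTransform_cyclotomicLabel_succ hχ τ t hc,
      fiberTransform_cyclotomicLabel_succ hχ τ t hc']
    exact hT i c c' hc hc' hcc'

theorem cyclotomicLabel_card_factorsThrough [Fintype F] [Fintype A] [DecidableEq A]
    (hψ : ψ.IsPrimitive) (hχ : ∀ x y, x ≠ 0 → y ≠ 0 → χ (x * y) = χ x + χ y) (hneg : χ (-1) = 0)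
    (hsurj : ∀ b, ∃ w ≠ 0, χ w = b) {α : Fin 3 → ℂ} (hα : Injective α) {τ : A → Fin 3}
    (hη : ∀ a, gaussPeriod ψ χ a = α (τ a)) {t : A} (ht : ∀ a, τ a = τ t → a = t) (j l : Fin 4) :
    (fun d => #{w | cyclotomicLabel χ τ 0 (d - w) = j ∧ cyclotomicLabel χ τ 0 w = l}).FactorsThrough
      (cyclotomicLabel χ τ 0) := by
  have hT := shiftedClassSum_factorsThrough hα hη (sum_gaussPeriod_add hψ)
    (sum_gaussPeriod_mul_gaussPeriod_add hψ hχ hneg hsurj) ht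
  have hμ (s : A) (c c' : F) (h : cyclotomicLabel χ τ s c = cyclotomicLabel χ τ s c') :
      c = 0 ↔ c' = 0 := by
    rw [← cyclotomicLabel_eq_zero_iff (χ := χ) (τ := τ) (t := s), h, cyclotomicLabel_eq_zero_iff]
  refine card_filter_sub_factorsThrough hψ _ (cyclotomicLabel χ τ t) (cyclotomicLabel_neg hχ hneg)
    (fiberTransform_cyclotomicLabel_factorsThrough hχ τ 0 (hμ t) fun i c c' hc hc' h => ?_)
    (fiberTransform_cyclotomicLabel_factorsThrough hχ τ t (hμ 0) fun i c c' hc hc' h => ?_) j l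
  · rw [cyclotomicLabel_of_ne_zero hc, cyclotomicLabel_of_ne_zero hc', Fin.succ_inj] at h
    simpa using hT i h
  · rw [cyclotomicLabel_of_ne_zero hc, cyclotomicLabel_of_ne_zero hc', Fin.succ_inj] at h
    exact hT i (by simpa using h)

end CyclotomicScheme

theorem exists_zpowers_units_eq_of_orderOf {F : Type*} [Field F] [Fintype F] {γ : F}
    (hγ : orderOf γ = Fintype.card F - 1) :
    ∃ g : Fˣ, (g : F) = γ ∧ ∀ x, x ∈ Subgroup.zpowers g := by
  classical
  have hγ0 : γ ≠ 0 := by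
    rintro rfl
    have := Fintype.one_lt_card (α := F)
    rw [orderOf_zero] at hγ
    omega
  refine ⟨Units.mk0 γ hγ0, rfl, fun x => ?_⟩
  rw [Subgroup.eq_top_of_card_eq (Subgroup.zpowers _) ?_]
  · exact Subgroup.mem_top x
  rw [Nat.card_zpowers, ← orderOf_units, Units.val_mk0, hγ, Nat.card_eq_fintype_card,
    Fintype.card_units]

section DiscreteLog

theorem exists_pow_eq_of_ne_zero {F : Type*} [Field F] [Fintype F] {g : Fˣ}
    (hg : ∀ x, x ∈ Subgroup.zpowers g) {x : F} (hx : x ≠ 0) :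
    ∃ n < Nat.card Fˣ, (g : F) ^ n = x := by
  classical
  obtain ⟨n, hn, h⟩ := mem_image.mp (mem_zpowers_iff_mem_range_orderOf.mp (hg (Units.mk0 x hx)))
  exact ⟨n, orderOf_eq_card_of_forall_mem_zpowers hg ▸ mem_range.mp hn,
    by simpa using congrArg Units.val h⟩

variable {F : Type*} [Field F] {g : Fˣ} (hg : ∀ x, x ∈ Subgroup.zpowers g)
  [DecidableEq F] {N : ℕ} (hN : N ∣ Nat.card Fˣ)

/-- The discrete logarithm to the base `g`, reduced mod `N` (junk value `0` at `x = 0`). -/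
noncomputable def dlogMod (x : F) : ZMod N :=
  if hx : x = 0 then 0 else
    ZMod.castHom hN (ZMod N)
      (Multiplicative.toAdd ((zmodMulEquivOfGenerator hg rfl).symm (Units.mk0 x hx)))

theorem dlogMod_mul (x y : F) (hx : x ≠ 0) (hy : y ≠ 0) :
    dlogMod hg hN (x * y) = dlogMod hg hN x + dlogMod hg hN y := by
  rw [dlogMod, dlogMod, dlogMod, dif_neg (mul_ne_zero hx hy), dif_neg hx, dif_neg hy, Units.mk0_mul,
    map_mul, toAdd_mul, map_add]

theorem dlogMod_pow (n : ℕ) : dlogMod hg hN ((g : F) ^ n) = n := by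
  have hgn : (g : F) ^ n ≠ 0 := pow_ne_zero n g.ne_zero
  have hunit : Units.mk0 _ hgn = g ^ (n : ℤ) := by ext; simp
  rw [dlogMod, dif_neg hgn, hunit, zmodMulEquivOfGenerator_symm_apply_zpow]
  simp

theorem dlogMod_pow_val_add [NeZero N] (a : ZMod N) (j : ℕ) :
    dlogMod hg hN ((g : F) ^ (a.val + N * j)) = a := by
  simp [dlogMod_pow]

theorem cyclotomicClass_dlogMod_eq_image [Fintype F] [NeZero N] (a : ZMod N) :
    cyclotomicClass (dlogMod hg hN) a =
      (range (Nat.card Fˣ / N)).image fun j => (g : F) ^ (a.val + N * j) := by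
  ext x
  simp only [cyclotomicClass, mem_filter, mem_univ, true_and, mem_image, mem_range]
  constructor
  · rintro ⟨hx, rfl⟩
    obtain ⟨n, hn, rfl⟩ := exists_pow_eq_of_ne_zero hg hx
    refine ⟨n / N, ?_, ?_⟩
    · exact Nat.div_lt_div_of_lt_of_dvd hN hn
    · rw [dlogMod_pow, ZMod.val_natCast, Nat.mod_add_div]
  · rintro ⟨j, -, rfl⟩
    exact ⟨pow_ne_zero _ g.ne_zero, dlogMod_pow_val_add hg hN a j⟩

theorem exists_ne_zero_dlogMod_eq [NeZero N] (a : ZMod N) : ∃ w ≠ 0, dlogMod hg hN w = a :=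
  ⟨(g : F) ^ (a.val + N * 0), pow_ne_zero _ g.ne_zero, dlogMod_pow_val_add hg hN a 0⟩

theorem exists_mem_pow_iff_cyclotomicLabel [Fintype F] [NeZero N] {n : ℕ}
    {τ : ZMod N → Fin n} {I : Finset (ZMod N)} {i : Fin n} (hI : ∀ a, a ∈ I ↔ τ a = i) (x : F) :
    (∃ a ∈ I, ∃ j : ℕ, x = (g : F) ^ (a.val + N * j)) ↔
      cyclotomicLabel (dlogMod hg hN) τ 0 x = i.succ := by
  constructor
  · rintro ⟨a, ha, j, rfl⟩
    rw [cyclotomicLabel_of_ne_zero (pow_ne_zero _ g.ne_zero), zero_add, dlogMod_pow_val_add,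
      (hI a).mp ha]
  · intro h
    have hx : x ≠ 0 := fun hx =>
      Fin.succ_ne_zero i (h.symm.trans (cyclotomicLabel_eq_zero_iff.mpr hx))
    rw [cyclotomicLabel_of_ne_zero hx, zero_add, Fin.succ_inj] at h
    have hmem : x ∈ cyclotomicClass (dlogMod hg hN) (dlogMod hg hN x) := by
      simp [cyclotomicClass, hx]
    rw [cyclotomicClass_dlogMod_eq_image] at hmem
    obtain ⟨j, -, hj⟩ := mem_image.mp hmem
    exact ⟨_, (hI _).mpr h, j, hj.symm⟩

theorem gaussPeriod_dlogMod [Fintype F] [NeZero N] (ψ : AddChar F ℂ) (a : ZMod N) :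
    gaussPeriod ψ (dlogMod hg hN) a =
      ∑ j ∈ range (Nat.card Fˣ / N), ψ ((g : F) ^ (a.val + N * j)) := by
  have horder : orderOf (g : F) = Nat.card Fˣ := by
    rw [orderOf_units, orderOf_eq_card_of_forall_mem_zpowers hg]
  have hlt (j : ℕ) (hj : j ∈ range (Nat.card Fˣ / N)) : a.val + N * j < orderOf (g : F) := by
    have h1 : N * (j + 1) ≤ N * (Nat.card Fˣ / N) := Nat.mul_le_mul_left _ (mem_range.mp hj)
    have h2 := ZMod.val_lt a
    rw [Nat.mul_div_cancel' hN] at h1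
    rw [horder]
    linarith
  rw [gaussPeriod, cyclotomicClass_dlogMod_eq_image, sum_image]
  intro j hj j' hj' h
  have := pow_injOn_Iio_orderOf (hlt j hj) (hlt j' hj') h
  exact Nat.eq_of_mul_eq_mul_left (Nat.pos_of_neZero N) (by omega)

end DiscreteLog

theorem stmt_5_general
    (p N q : ℕ) [Fact p.Prime] [NeZero N] (hNq : N ∣ q - 1)
    (F : Type) [Field F] [Fintype F] [Algebra (ZMod p) F]
    (hcard : Fintype.card F = q)
    (γ : F) (hγ : orderOf γ = q - 1)
    (ζ : ℂ) (hζ : IsPrimitiveRoot ζ p)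
    (ψ : F → ℂ) (hψ : ∀ x, ψ x = ζ ^ (Algebra.trace (ZMod p) F x).val)
    (η : ℕ → ℂ)
    (hη : ∀ a, η a = ∑ j ∈ Finset.range ((q - 1) / N), ψ (γ ^ (a + N * j)))
    -- -1 ∈ C₀ = ⟨γ^N⟩
    (hneg : ∃ j : ℕ, (-1 : F) = γ ^ (N * j))
    (α₁ α₂ α₃ : ℚ)
    (h12 : α₁ ≠ α₂) (h13 : α₁ ≠ α₃) (h23 : α₂ ≠ α₃)
    (hval : {c : ℂ | ∃ a, a < N ∧ η a = c} = {(α₁ : ℂ), (α₂ : ℂ), (α₃ : ℂ)})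
    (I₁ I₂ I₃ : Finset (ZMod N))
    (hI₁ : ∀ x : ZMod N, x ∈ I₁ ↔ η x.val = (α₁ : ℂ))
    (hI₂ : ∀ x : ZMod N, x ∈ I₂ ↔ η x.val = (α₂ : ℂ))
    (hI₃ : ∀ x : ZMod N, x ∈ I₃ ↔ η x.val = (α₃ : ℂ))
    -- the four relations
    (R : Fin 4 → Set F)
    (hR0 : R 0 = {0})
    (hR1 : R 1 = {x : F | ∃ a : ZMod N, a ∈ I₁ ∧ ∃ j : ℕ, x = γ ^ (a.val + N * j)})
    (hR2 : R 2 = {x : F | ∃ a : ZMod N, a ∈ I₂ ∧ ∃ j : ℕ, x = γ ^ (a.val + N * j)})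
    (hR3 : R 3 = {x : F | ∃ a : ZMod N, a ∈ I₃ ∧ ∃ j : ℕ, x = γ ^ (a.val + N * j)})
    -- |I₁| = 1 or |I₃| = 1
    (hone : I₁.card = 1 ∨ I₃.card = 1) :
    (∀ j : Fin 4, ∀ x y : F, x - y ∈ R j → y - x ∈ R j)
    ∧ (∀ j l m : Fin 4, ∃ c : ℕ, ∀ x y : F, x - y ∈ R m →
        Nat.card {z : F // x - z ∈ R j ∧ z - y ∈ R l} = c) := by
  classical
  have hK : Nat.card Fˣ = q - 1 := by rw [Nat.card_eq_fintype_card, Fintype.card_units, hcard]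
  obtain ⟨g, rfl, hg⟩ := exists_zpowers_units_eq_of_orderOf (hcard ▸ hγ)
  obtain ⟨Ψ, hΨ, hψΨ⟩ := exists_isPrimitive_addChar_eq_pow_trace (F := F) hζ
  have hNg : N ∣ Nat.card Fˣ := hK ▸ hNq
  set χ := dlogMod hg hNg
  have hηχ (a : ZMod N) : η a.val = gaussPeriod Ψ χ a := by
    simp only [hη, hψ, ← hψΨ, ← hK]
    exact (gaussPeriod_dlogMod hg hNg Ψ a).symm
  set α : Fin 3 → ℂ := ![(α₁ : ℂ), α₂, α₃]
  have hα : Injective α := by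
    intro i k h
    fin_cases i <;> fin_cases k <;> simp_all [α, eq_comm]
  have hvals (a : ZMod N) : ∃ i, gaussPeriod Ψ χ a = α i := by
    have ha : η a.val ∈ {c : ℂ | ∃ a, a < N ∧ η a = c} := ⟨a.val, a.val_lt, rfl⟩
    simpa [hval, hηχ, Fin.exists_fin_succ, α, or_assoc] using ha
  choose τ hτ using hvals
  have hI (k : Fin 3) (a : ZMod N) : a ∈ ![I₁, I₂, I₃] k ↔ τ a = k := by
    fin_cases k <;> simp [hI₁, hI₂, hI₃, hηχ, hτ, ← hα.eq_iff, α]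
  obtain ⟨t, ht⟩ := hone.elim (exists_forall_eq_of_card_eq_one (hI 0))
    (exists_forall_eq_of_card_eq_one (hI 2))
  have hR (j : Fin 4) (x : F) : x ∈ R j ↔ cyclotomicLabel χ τ 0 x = j := by
    cases j using Fin.cases with
    | zero => simp [hR0, cyclotomicLabel_eq_zero_iff]
    | succ k =>
      rw [← exists_mem_pow_iff_cyclotomicLabel hg hNg (hI k)]
      fin_cases k <;> simp [hR1, hR2, hR3]
  have hχneg : χ (-1) = 0 := by
    obtain ⟨j, hj⟩ := hneg
    simp [χ, hj, dlogMod_pow]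
  exact symmetric_scheme_of_label R _ hR (cyclotomicLabel_neg (dlogMod_mul hg hNg) hχneg)
    (cyclotomicLabel_card_factorsThrough hΨ (dlogMod_mul hg hNg) hχneg
      (exists_ne_zero_dlogMod_eq hg hNg) hα hτ ht)

/-- Theorem 2.8 / `selfasso`.  Assume `-1 ∈ C₀` and the Gauss periods
of order `N` of `F_q` take exactly three rational values `α₁, α₂, α₃`.  With
`R₀ = {0}` and `R_j = ⋃_{i ∈ I_j} γ^i C₀`, if `|I₁| = 1` or `|I₃| = 1`, then the
relations `𝓡_j = {(x,y) : x - y ∈ R_j}` form a symmetric three-class association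
scheme on `F_q`. -/
theorem stmt_5
    (p f N q : ℕ) [Fact p.Prime] (hf : 0 < f) (hq : q = p ^ f)
    (hN : 2 < N) [NeZero N] (hNq : N ∣ q - 1)
    (F : Type) [Field F] [Fintype F] [Algebra (ZMod p) F]
    (hcard : Fintype.card F = q)
    (γ : F) (hγ : orderOf γ = q - 1)
    (ζ : ℂ) (hζ : IsPrimitiveRoot ζ p)
    (ψ : F → ℂ) (hψ : ∀ x, ψ x = ζ ^ (Algebra.trace (ZMod p) F x).val)
    (η : ℕ → ℂ)
    (hη : ∀ a, η a = ∑ j ∈ Finset.range ((q - 1) / N), ψ (γ ^ (a + N * j)))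
    -- -1 ∈ C₀ = ⟨γ^N⟩
    (hneg : ∃ j : ℕ, (-1 : F) = γ ^ (N * j))
    (α₁ α₂ α₃ : ℚ)
    (h12 : α₁ ≠ α₂) (h13 : α₁ ≠ α₃) (h23 : α₂ ≠ α₃)
    (hval : {c : ℂ | ∃ a, a < N ∧ η a = c} = {(α₁ : ℂ), (α₂ : ℂ), (α₃ : ℂ)})
    (I₁ I₂ I₃ : Finset (ZMod N))
    (hI₁ : ∀ x : ZMod N, x ∈ I₁ ↔ η x.val = (α₁ : ℂ))
    (hI₂ : ∀ x : ZMod N, x ∈ I₂ ↔ η x.val = (α₂ : ℂ))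
    (hI₃ : ∀ x : ZMod N, x ∈ I₃ ↔ η x.val = (α₃ : ℂ))
    -- the four relations
    (R : Fin 4 → Set F)
    (hR0 : R 0 = {0})
    (hR1 : R 1 = {x : F | ∃ a : ZMod N, a ∈ I₁ ∧ ∃ j : ℕ, x = γ ^ (a.val + N * j)})
    (hR2 : R 2 = {x : F | ∃ a : ZMod N, a ∈ I₂ ∧ ∃ j : ℕ, x = γ ^ (a.val + N * j)})
    (hR3 : R 3 = {x : F | ∃ a : ZMod N, a ∈ I₃ ∧ ∃ j : ℕ, x = γ ^ (a.val + N * j)})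
    -- |I₁| = 1 or |I₃| = 1
    (hone : I₁.card = 1 ∨ I₃.card = 1) :
    (∀ j : Fin 4, ∀ x y : F, x - y ∈ R j → y - x ∈ R j)
    ∧ (∀ j l m : Fin 4, ∃ c : ℕ, ∀ x y : F, x - y ∈ R m →
        Nat.card {z : F // x - z ∈ R j ∧ z - y ∈ R l} = c) :=
  stmt_5_general p N q hNq F hcard γ hγ ζ hζ ψ hψ η hη hneg α₁ α₂ α₃ h12 h13 h23 hval I₁ I₂ I₃ hI₁
    hI₂ hI₃ R hR0 hR1 hR2 hR3 hone
end

section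
/- Let q be a prime power with q ≡ 1 (mod 3), let γ be an element of order k = 3(q−1) in F_{q^3}^*, and assume the multiplicative order of q modulo k equals 3. Set N = (q³−1)/k, so that C₀ = ⟨γ⟩ is the subgroup of index N of F_{q^3}^*, and C₀ = F_q^*·1 ∪ F_q^*·γ ∪ F_q^*·γ². Then the Gauss periods of order N of F_{q^3} take exactly the three values α₁ = −3, α₂ = q − 3, α₃ = 2q − 3 (an arithmetic progression with common difference q), and the multiplicities are |I₁| = (q−1)²/3, |I₂| = q − 1, |I₃| = 1, where I_i is the set of a ∈ ℤ_N for which the Gauss period η_a equals α_i. -/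
/-!
Write `y = γ' ^ a` and `𝔽_q ⊆ E` for the fixed field of `x ↦ x ^ q`. Since `γ³` generates
`𝔽_q^*`, the subgroup `C₀ = ⟨γ⟩` is `𝔽_q^* ∪ 𝔽_q^* γ ∪ 𝔽_q^* γ²`, so
`η_a = ∑_{i < 3} (∑_{c ∈ 𝔽_q} ψ (c y γ^i) - 1)`, and each inner sum is `q` or `0` according to
whether `ψ` is trivial on the line `𝔽_q · y γ^i`. Hence `η_a = q T_a - 3`, where `T_a` counts the
trivial lines. `T_a = 3` is impossible: `γ ∉ 𝔽_q` and `[E : 𝔽_q] = 3` is prime, so `1, γ, γ²`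
span `E`, and `ψ` would be trivial on `y E = E`.

Orthogonality of the primitive character `ψ` gives the moments `∑_a η_a = -1` and
`∑_a η_a² = q³ - k`, the latter because `-1 ∈ C₀`. They say `∑ T_a = q + 1` and
`∑ T_a² = q + 3`, which force exactly one `T_a = 2`, `q - 1` of them equal to `1`, and the
remaining `(q - 1)² / 3` equal to `0`.
-/

open Finset Module

theorem Finset.sum_range_mul_eq_sum_sum {M : Type*} [AddCommMonoid M] (n k : ℕ) (f : ℕ → M) :
    ∑ t ∈ range (k * n), f t = ∑ a ∈ range n, ∑ j ∈ range k, f (a + n * j) := by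
  rw [← Fin.sum_univ_eq_sum_range, ← finProdFinEquiv.sum_comp, Fintype.sum_prod_type,
    Finset.sum_comm]
  simp [← Fin.sum_univ_eq_sum_range]

theorem Finset.sum_range_add_of_periodic {M : Type*} [AddCommMonoid M] {f : ℕ → M} {k : ℕ}
    (hf : Function.Periodic f k) (j : ℕ) :
    ∑ s ∈ range k, f (j + s) = ∑ s ∈ range k, f s := by
  have h := Finset.sum_Ico_eq_sum_range f j (j + k)
  rw [Nat.add_sub_cancel_left] at h
  rw [← h, Finset.sum_congr rfl fun t _ => (hf.map_mod_nat t).symm]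
  exact (congrArg Multiset.sum (Multiset.map_map f (· % k) _)).symm.trans
    (congrArg (fun s => (s.map f).sum) (Nat.multiset_Ico_map_mod j k))

theorem ZMod.sum_val_eq_sum_range {M : Type*} [AddCommMonoid M] (N : ℕ) [NeZero N]
    (f : ℕ → M) : ∑ x : ZMod N, f x.val = ∑ a ∈ range N, f a := by
  obtain ⟨n, rfl⟩ := Nat.exists_eq_succ_of_ne_zero (NeZero.ne N)
  exact Fin.sum_univ_eq_sum_range f _

theorem orderOf_pow_of_orderOf_eq_mul {G : Type*} [Monoid G] {x : G} {n k : ℕ} (hn : n ≠ 0)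
    (hx : orderOf x = n * k) : orderOf (x ^ n) = k := by
  rw [orderOf_pow_of_dvd hn (hx ▸ dvd_mul_right n k), hx,
    Nat.mul_div_cancel_left _ (Nat.pos_of_ne_zero hn)]

theorem ne_zero_of_orderOf_eq_card_sub_one {E : Type*} [Field E] [Fintype E] {x : E}
    (hx : orderOf x = Fintype.card E - 1) : x ≠ 0 := fun h => by
  simp [h] at hx
  have := Fintype.one_lt_card (α := E)
  omega

theorem span_range_pow_eq_top_of_finrank_prime {K L : Type*} [Field K] [Field L] [Algebra K L]
    [FiniteDimensional K L] (hL : (finrank K L).Prime) {x : L}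
    (hx : x ∉ (algebraMap K L).range) :
    Submodule.span K (Set.range fun i : Fin (finrank K L) => x ^ (i : ℕ)) = ⊤ := by
  have hdeg : (minpoly K x).natDegree = finrank K L :=
    (hL.eq_one_or_self_of_dvd _ (minpoly.degree_dvd (.of_finite K x))).resolve_left
      (mt minpoly.natDegree_eq_one_iff.1 hx)
  have hli := linearIndependent_pow (K := K) x
  rw [hdeg] at hli
  exact hli.span_eq_top_of_card_eq_finrank' (Fintype.card_fin _)

theorem AddChar.sum_comp_eq_ite {A B R : Type*} [AddGroup A] [Fintype A] [AddMonoid B]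
    [CommRing R] [IsDomain R] (ψ : AddChar B R) (φ : A →+ B) [Decidable (∀ a, ψ (φ a) = 1)] :
    ∑ a, ψ (φ a) = if ∀ a, ψ (φ a) = 1 then (Fintype.card A : R) else 0 := by
  classical
  simpa only [compAddMonoidHom_apply, AddChar.eq_zero_iff] using
    (ψ.compAddMonoidHom φ).sum_eq_ite

theorem AddChar.isPrimitive_zmodChar_comp_trace (p : ℕ) [Fact p.Prime] (E : Type*) [Field E]
    [Finite E] [Algebra (ZMod p) E] {C : Type*} [CommMonoid C] {ζ : C}
    (hζ : IsPrimitiveRoot ζ p) :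
    ((zmodChar p hζ.pow_eq_one).compAddMonoidHom
      (Algebra.trace (ZMod p) E).toAddMonoidHom).IsPrimitive := by
  have : CharP E p := charP_of_injective_algebraMap (algebraMap (ZMod p) E).injective p
  obtain ⟨b, hb⟩ : ∃ b : E, Algebra.trace (ZMod p) E b ≠ 0 := by
    have h := ringChar.eq E p
    subst h
    simpa using FiniteField.trace_to_zmod_nondegenerate E (one_ne_zero (α := E))
  refine IsPrimitive.of_ne_one (ne_one_iff.2 ⟨b, ?_⟩)
  rw [compAddMonoidHom_apply]
  exact mt ((zmodChar_primitive_of_primitive_root p hζ).zmod_char_eq_one_iff p _).1 hb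

theorem AddChar.sum_range_pow_mul_eq_ite {E R : Type*} [Field E] [Fintype E] [DecidableEq E]
    [CommRing R] [IsDomain R] {ψ : AddChar E R} (hψ : ψ.IsPrimitive) {γ' : E}
    (hγ' : orderOf γ' = Fintype.card E - 1) (z : E) :
    ∑ t ∈ range (Fintype.card E - 1), ψ (γ' ^ t * z)
      = if z = 0 then (Fintype.card E : R) - 1 else -1 := by
  have hinj : Set.InjOn (γ' ^ ·) (range (Fintype.card E - 1)) := fun s hs t ht hst =>
    pow_injOn_Iio_orderOf (by simpa [hγ'] using hs) (by simpa [hγ'] using ht) hst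
  have himage : (range (Fintype.card E - 1)).image (γ' ^ ·) = univ.erase 0 := by
    refine eq_of_subset_of_card_le (fun x hx => ?_) ?_
    · obtain ⟨s, -, rfl⟩ := mem_image.1 hx
      exact mem_erase.2 ⟨pow_ne_zero s (ne_zero_of_orderOf_eq_card_sub_one hγ'), mem_univ _⟩
    · rw [card_erase_of_mem (mem_univ 0), card_univ, card_image_of_injOn hinj, card_range]
  rw [← sum_image (f := fun x => ψ (x * z)) hinj, himage, sum_erase_eq_sub (mem_univ 0),
    sum_mulShift z hψ]
  split_ifs <;> simp

section FrobeniusFixedField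

variable (E : Type*) [Field E] (p m : ℕ) [ExpChar E p]

/-- The copy of `𝔽_{p^m}` inside `E` (when `E` is finite and contains one). -/
def frobeniusFixedField : Subfield E := (iterateFrobenius E p m).eqLocusField (RingHom.id E)

variable {E p m}

theorem mem_frobeniusFixedField {x : E} : x ∈ frobeniusFixedField E p m ↔ x ^ p ^ m = x :=
  Iff.rfl

instance [DecidableEq E] : DecidablePred (· ∈ frobeniusFixedField E p m) := fun x =>
  decidable_of_iff (x ^ p ^ m = x) Iff.rfl

theorem mem_frobeniusFixedField_iff_of_orderOf_eq (hq : 1 < p ^ m) {ξ : E}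
    (hξ : orderOf ξ = p ^ m - 1) {x : E} :
    x ∈ frobeniusFixedField E p m ↔ x = 0 ∨ ∃ s < p ^ m - 1, ξ ^ s = x := by
  have : NeZero (p ^ m - 1) := ⟨by omega⟩
  have hpow (y : E) : y ^ p ^ m = y ^ (p ^ m - 1) * y := (pow_sub_one_mul (by omega) y).symm
  have hξ1 : ξ ^ (p ^ m - 1) = 1 := hξ ▸ pow_orderOf_eq_one ξ
  rw [mem_frobeniusFixedField]
  constructor
  · intro hx
    refine or_iff_not_imp_left.2 fun hx0 => (hξ ▸ IsPrimitiveRoot.orderOf ξ).eq_pow_of_pow_eq_one ?_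
    exact mul_right_cancel₀ hx0 (by rw [← hpow, hx, one_mul])
  · rintro (rfl | ⟨s, -, rfl⟩)
    · exact zero_pow (by omega)
    · rw [← pow_mul, mul_comm, pow_mul, hpow ξ, hξ1, one_mul]

theorem sum_frobeniusFixedField_eq [Fintype E] [DecidableEq E] {M : Type*} [AddCommMonoid M]
    (hq : 1 < p ^ m) {ξ : E} (hξ : orderOf ξ = p ^ m - 1) (g : E → M) :
    ∑ c : frobeniusFixedField E p m, g c = g 0 + ∑ s ∈ range (p ^ m - 1), g (ξ ^ s) := by
  have hξ0 : ξ ≠ 0 := fun h => by simp [h] at hξ; omega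
  rw [← sum_subtype (insert 0 ((range (p ^ m - 1)).image (ξ ^ ·))), sum_insert, sum_image]
  · intro s hs t ht hst
    exact pow_injOn_Iio_orderOf (by simpa [hξ] using hs) (by simpa [hξ] using ht) hst
  · simp [hξ0]
  · intro x
    rw [mem_frobeniusFixedField_iff_of_orderOf_eq hq hξ]
    simp [eq_comm]

theorem card_frobeniusFixedField [Fintype E] [DecidableEq E] (hq : 1 < p ^ m) {ξ : E}
    (hξ : orderOf ξ = p ^ m - 1) : Fintype.card (frobeniusFixedField E p m) = p ^ m := by
  have := sum_frobeniusFixedField_eq hq hξ fun _ => 1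
  simp only [sum_const, card_univ, smul_eq_mul, mul_one, card_range] at this
  omega

end FrobeniusFixedField

open Classical in
noncomputable def numTrivialLines {E : Type*} [Field E] [Fintype E] [DecidableEq E]
    (ψ : AddChar E ℂ) (p m : ℕ) [ExpChar E p] (γ y : E) : ℕ :=
  #{i ∈ range 3 | ∀ c : frobeniusFixedField E p m, ψ (c * (y * γ ^ i)) = 1}

section GaussPeriod

variable {E : Type*} [Field E] [Fintype E] [DecidableEq E] {p m : ℕ} [ExpChar E p]
  {ψ : AddChar E ℂ} {γ : E}

open Classical in
theorem sum_range_mul_pow_eq_numTrivialLines (hq : 1 < p ^ m)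
    (hγ : orderOf γ = 3 * (p ^ m - 1)) (y : E) :
    ∑ j ∈ range (3 * (p ^ m - 1)), ψ (y * γ ^ j)
      = ((p ^ m : ℕ) : ℂ) * numTrivialLines ψ p m γ y - 3 := by
  have hξ := orderOf_pow_of_orderOf_eq_mul three_ne_zero hγ
  have hline (i : ℕ) : ∑ s ∈ range (p ^ m - 1), ψ (y * γ ^ (i + 3 * s))
      = (if ∀ c : frobeniusFixedField E p m, ψ (c * (y * γ ^ i)) = 1 then (p ^ m : ℂ) else 0)
        - 1 := by
    have h := sum_frobeniusFixedField_eq hq hξ fun c => ψ (c * (y * γ ^ i))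
    have h' := ψ.sum_comp_eq_ite ((AddMonoidHom.mulRight (y * γ ^ i)).comp
      (frobeniusFixedField E p m).subtype.toAddMonoidHom)
    simp only [AddMonoidHom.comp_apply, AddMonoidHom.coe_mulRight, RingHom.toAddMonoidHom_eq_coe,
      AddMonoidHom.coe_coe, Subfield.subtype_apply, card_frobeniusFixedField hq hξ] at h'
    rw [zero_mul, AddChar.map_zero_eq_one] at h
    have hpow (s : ℕ) : y * γ ^ (i + 3 * s) = (γ ^ 3) ^ s * (y * γ ^ i) := by ring
    simp only [hpow]
    push_cast at h'
    linear_combination h' - h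
  rw [mul_comm 3, sum_range_mul_eq_sum_sum, sum_congr rfl fun i _ => hline i, sum_sub_distrib,
    ← sum_filter, sum_const, sum_const, card_range, numTrivialLines]
  simp [mul_comm]

theorem span_range_pow_eq_top_of_orderOf_eq (hq : 1 < p ^ m)
    (hE : Fintype.card E = (p ^ m) ^ 3) (hγ : orderOf γ = 3 * (p ^ m - 1)) :
    Submodule.span (frobeniusFixedField E p m) (Set.range fun i : Fin 3 => γ ^ (i : ℕ)) = ⊤ := by
  set F := frobeniusFixedField E p m
  have hfinrank : finrank F E = 3 := by
    have h := Module.card_eq_pow_finrank (K := F) (V := E)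
    rw [hE, card_frobeniusFixedField hq (orderOf_pow_of_orderOf_eq_mul three_ne_zero hγ)] at h
    exact (Nat.pow_right_injective hq h).symm
  have hγF : γ ∉ (algebraMap F E).range := by
    rintro ⟨c, hc⟩
    have hγq : γ ^ p ^ m = γ ^ 1 := by rw [pow_one, ← hc]; exact c.2
    have hfin : IsOfFinOrder γ := orderOf_pos_iff.1 (by rw [hγ]; omega)
    have hdvd := (Nat.modEq_iff_dvd' hq.le).1 (hfin.pow_eq_pow_iff_modEq.1 hγq).symm
    rw [hγ] at hdvd
    have := Nat.le_of_dvd (by omega) hdvd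
    omega
  have hspan := span_range_pow_eq_top_of_finrank_prime (hfinrank ▸ Nat.prime_three) hγF
  rwa [hfinrank] at hspan

open Classical in
theorem numTrivialLines_le_two (hψ : ψ.IsPrimitive) (hq : 1 < p ^ m)
    (hE : Fintype.card E = (p ^ m) ^ 3) (hγ : orderOf γ = 3 * (p ^ m - 1)) {y : E} (hy : y ≠ 0) :
    numTrivialLines ψ p m γ y ≤ 2 := by
  by_contra hT
  have hall : ∀ i < 3, ∀ c : frobeniusFixedField E p m, ψ (c * (y * γ ^ i)) = 1 := by
    unfold numTrivialLines at hT
    have h3 := eq_of_subset_of_card_le (filter_subset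
      (fun i => ∀ c : frobeniusFixedField E p m, ψ (c * (y * γ ^ i)) = 1) (range 3))
      (by rw [card_range]; omega)
    exact fun i hi => filter_eq_self.1 h3 i (mem_range.2 hi)
  refine hψ hy (AddChar.ext _ _ fun z => ?_)
  obtain ⟨c, rfl⟩ := (Submodule.mem_span_range_iff_exists_fun _).1
    ((span_range_pow_eq_top_of_orderOf_eq hq hE hγ).symm ▸ Submodule.mem_top (x := z))
  have hterm (i : Fin 3) : ψ (y * c i • γ ^ (i : ℕ)) = 1 := by
    rw [Subfield.smul_def, smul_eq_mul, mul_left_comm]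
    exact hall i i.2 (c i)
  simp only [AddChar.mulShift_apply, AddChar.one_apply, Fin.sum_univ_three,
    AddChar.map_add_eq_mul, hterm, mul_one]

end GaussPeriod

theorem card_filter_pow_eq_neg_one {E : Type*} [Field E] [DecidableEq E] {p m : ℕ}
    [ExpChar E p] {γ : E} (hq : 1 < p ^ m) (hγ : orderOf γ = 3 * (p ^ m - 1)) :
    #{s ∈ range (3 * (p ^ m - 1)) | γ ^ s = -1} = 1 := by
  have hneg : (-1 : E) ∈ frobeniusFixedField E p m := by
    rw [mem_frobeniusFixedField, ← iterateFrobenius_def, map_neg, map_one]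
  obtain ⟨s, hs, hγs⟩ := ((mem_frobeniusFixedField_iff_of_orderOf_eq hq
    (orderOf_pow_of_orderOf_eq_mul three_ne_zero hγ)).1 hneg).resolve_left
    (neg_ne_zero.2 one_ne_zero)
  rw [← pow_mul] at hγs
  rw [card_eq_one]
  refine ⟨3 * s, ext fun t => ?_⟩
  simp only [mem_filter, mem_range, mem_singleton]
  constructor
  · rintro ⟨ht, hγt⟩
    exact pow_injOn_Iio_orderOf (by simpa [hγ] using ht) (by simp [hγ]; omega) (hγt.trans hγs.symm)
  · rintro rfl
    exact ⟨by omega, hγs⟩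

section Moments

variable {E R : Type*} [Field E] [Fintype E] [DecidableEq E] [CommRing R] [IsDomain R]
  {ψ : AddChar E R} {γ' γ : E} {N k : ℕ}

theorem sum_range_sum_range_pow_mul_pow (hψ : ψ.IsPrimitive)
    (hγ' : orderOf γ' = Fintype.card E - 1) (hγ : γ = γ' ^ N)
    (hkN : k * N = Fintype.card E - 1) :
    ∑ a ∈ range N, ∑ j ∈ range k, ψ (γ' ^ a * γ ^ j) = -1 := by
  have h := ψ.sum_range_pow_mul_eq_ite hψ hγ' 1
  rw [if_neg one_ne_zero, ← hkN, sum_range_mul_eq_sum_sum] at h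
  simpa only [hγ, mul_one, ← pow_mul, ← pow_add] using h

theorem sum_range_sq_sum_range_pow_mul_pow (hψ : ψ.IsPrimitive)
    (hγ' : orderOf γ' = Fintype.card E - 1) (hγ : γ = γ' ^ N)
    (hkN : k * N = Fintype.card E - 1) :
    ∑ a ∈ range N, (∑ j ∈ range k, ψ (γ' ^ a * γ ^ j)) ^ 2
      = Fintype.card E * #{s ∈ range k | γ ^ s = -1} - k := by
  have hγk : γ ^ k = 1 := by
    rw [hγ, ← pow_mul, mul_comm, hkN, ← hγ']
    exact pow_orderOf_eq_one γ'
  have hsq (y : E) : (∑ j ∈ range k, ψ (y * γ ^ j)) ^ 2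
      = ∑ j ∈ range k, ∑ s ∈ range k, ψ (y * γ ^ j * (1 + γ ^ s)) := by
    rw [sq, sum_mul_sum]
    refine sum_congr rfl fun j _ => ?_
    have hper : Function.Periodic (fun s => ψ (y * γ ^ j + y * γ ^ s)) k := fun s => by
      simp only [pow_add, hγk, mul_one]
    simp_rw [← AddChar.map_add_eq_mul]
    rw [← sum_range_add_of_periodic hper j]
    refine sum_congr rfl fun s _ => ?_
    rw [pow_add]
    ring_nf
  have hline (s : ℕ) : ∑ a ∈ range N, ∑ j ∈ range k, ψ (γ' ^ a * γ ^ j * (1 + γ ^ s))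
      = (Fintype.card E : R) * (if γ ^ s = -1 then 1 else 0) - 1 := by
    have h := ψ.sum_range_pow_mul_eq_ite hψ hγ' (1 + γ ^ s)
    rw [← hkN, sum_range_mul_eq_sum_sum] at h
    simp only [hγ, ← pow_mul, ← pow_add] at h ⊢
    simp only [h, add_eq_zero_iff_eq_neg']
    split_ifs <;> ring
  calc ∑ a ∈ range N, (∑ j ∈ range k, ψ (γ' ^ a * γ ^ j)) ^ 2
      = ∑ s ∈ range k, ∑ a ∈ range N, ∑ j ∈ range k, ψ (γ' ^ a * γ ^ j * (1 + γ ^ s)) := by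
        simp_rw [hsq]
        exact (sum_congr rfl fun a _ => sum_comm).trans sum_comm
    _ = ∑ s ∈ range k, ((Fintype.card E : R) * (if γ ^ s = -1 then 1 else 0) - 1) :=
        sum_congr rfl fun s _ => hline s
    _ = Fintype.card E * #{s ∈ range k | γ ^ s = -1} - k := by
        rw [sum_sub_distrib, ← mul_sum, sum_boole]
        simp

end Moments

theorem mul_div_eq_and_three_mul_div_eq {q : ℕ} (hq : 1 < q) (hq3 : q % 3 = 1) :
    3 * (q - 1) * ((q ^ 3 - 1) / (3 * (q - 1))) = q ^ 3 - 1 ∧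
      3 * ((q ^ 3 - 1) / (3 * (q - 1))) = q ^ 2 + q + 1 := by
  obtain ⟨t, rfl⟩ : ∃ t, q = 3 * t + 1 := ⟨q / 3, by omega⟩
  have hcube : (3 * t + 1) ^ 3 = 3 * (3 * t) * (3 * t ^ 2 + 3 * t + 1) + 1 := by ring
  rw [hcube, Nat.add_sub_cancel, Nat.add_sub_cancel,
    Nat.mul_div_cancel_left _ (by omega : 0 < 3 * (3 * t))]
  constructor <;> ring

theorem card_filter_eq_of_sum_eq_of_sum_sq_eq {ι : Type*} (s : Finset ι) {T : ι → ℕ}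
    (hT : ∀ i ∈ s, T i ≤ 2) {q : ℕ} (h1 : ∑ i ∈ s, T i = q + 1) (h2 : ∑ i ∈ s, T i ^ 2 = q + 3) :
    #{i ∈ s | T i = 0} + q = #s ∧ #{i ∈ s | T i = 1} + 1 = q ∧ #{i ∈ s | T i = 2} = 1 := by
  have hfiber (f : ℕ → ℕ) : ∑ i ∈ s, f (T i) = ∑ v ∈ range 3, #{i ∈ s | T i = v} * f v := by
    rw [← sum_fiberwise_of_maps_to (t := range 3) fun i hi =>
      mem_range.2 (Nat.lt_succ_of_le (hT i hi))]
    refine sum_congr rfl fun v _ => ?_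
    rw [sum_congr rfl fun i hi => by rw [(mem_filter.1 hi).2], sum_const, smul_eq_mul]
  have h0 := hfiber fun _ => 1
  rw [hfiber fun v => v] at h1
  rw [hfiber (· ^ 2)] at h2
  simp only [sum_range_succ, range_zero, sum_empty, sum_const, smul_eq_mul, mul_one]
    at h0 h1 h2
  omega

theorem sum_eq_and_sum_sq_eq_of_moments {ι : Type*} (s : Finset ι) (T : ι → ℕ) {q : ℕ}
    (hq : q ≠ 0) (hs : 3 * #s = q ^ 2 + q + 1)
    (h1 : ∑ i ∈ s, ((q : ℂ) * T i - 3) = -1)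
    (h2 : ∑ i ∈ s, ((q : ℂ) * T i - 3) ^ 2 = (q : ℂ) ^ 3 - 3 * ((q : ℂ) - 1)) :
    ∑ i ∈ s, T i = q + 1 ∧ ∑ i ∈ s, T i ^ 2 = q + 3 := by
  have hqC : (q : ℂ) ≠ 0 := Nat.cast_ne_zero.2 hq
  have hsC : 3 * (#s : ℂ) = (q : ℂ) ^ 2 + q + 1 := by exact_mod_cast hs
  have hexpand (i : ι) :
      ((q : ℂ) * T i - 3) ^ 2 = (q : ℂ) ^ 2 * (T i : ℂ) ^ 2 - 6 * q * T i + 9 := by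
    ring
  simp only [hexpand, sum_add_distrib, sum_sub_distrib, ← mul_sum, sum_const, nsmul_eq_mul] at h1 h2
  have hsum : (∑ i ∈ s, (T i : ℂ)) = q + 1 :=
    mul_left_cancel₀ hqC (by linear_combination h1 + hsC)
  have hsum2 : (∑ i ∈ s, (T i : ℂ) ^ 2) = q + 3 :=
    mul_left_cancel₀ (pow_ne_zero 2 hqC) (by linear_combination h2 + 6 * q * hsum - 3 * hsC)
  exact ⟨by exact_mod_cast hsum, by exact_mod_cast hsum2⟩

theorem setOf_exists_lt_eq_of_levels {N q : ℕ} {η : ℕ → ℂ} {T : ℕ → ℕ}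
    (hT : ∀ a, T a ≤ 2) (hηT : ∀ a, η a = q * T a - 3) (hlevels : ∀ v ≤ 2, ∃ a < N, T a = v) :
    {c : ℂ | ∃ a, a < N ∧ η a = c} = {(-3 : ℂ), (q : ℂ) - 3, 2 * (q : ℂ) - 3} := by
  have hvalue (v : ℕ) (hv : v ≤ 2) :
      (q * v - 3 : ℂ) = -3 ∨ (q * v - 3 : ℂ) = q - 3 ∨ (q * v - 3 : ℂ) = 2 * q - 3 := by
    interval_cases v <;> push_cast <;> ring_nf <;> simp
  ext c
  simp only [Set.mem_ofPred_eq, Set.mem_insert_iff, Set.mem_singleton_iff]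
  constructor
  · rintro ⟨a, -, rfl⟩
    exact hηT a ▸ hvalue (T a) (hT a)
  · have hattain (v : ℕ) (hv : v ≤ 2) : ∃ a < N, η a = q * v - 3 := by
      obtain ⟨a, ha, hTa⟩ := hlevels v hv
      exact ⟨a, ha, by rw [hηT, hTa]⟩
    rintro (rfl | rfl | rfl)
    · simpa using hattain 0 (by norm_num)
    · simpa using hattain 1 (by norm_num)
    · simpa [mul_comm] using hattain 2 le_rfl

theorem values_and_card_levels_of_moments {N q : ℕ} [NeZero N] (hq : 1 < q)
    (hN : 3 * N = q ^ 2 + q + 1) {η : ℕ → ℂ} {T : ℕ → ℕ} (hT : ∀ a, T a ≤ 2)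
    (hηT : ∀ a, η a = q * T a - 3) (h1 : ∑ a ∈ range N, η a = -1)
    (h2 : ∑ a ∈ range N, η a ^ 2 = (q : ℂ) ^ 3 - 3 * ((q : ℂ) - 1))
    (I₁ I₂ I₃ : Finset (ZMod N))
    (hI₁ : ∀ x : ZMod N, x ∈ I₁ ↔ η x.val = (-3 : ℂ))
    (hI₂ : ∀ x : ZMod N, x ∈ I₂ ↔ η x.val = (q : ℂ) - 3)
    (hI₃ : ∀ x : ZMod N, x ∈ I₃ ↔ η x.val = 2 * (q : ℂ) - 3) :
    ({c : ℂ | ∃ a, a < N ∧ η a = c} = {(-3 : ℂ), (q : ℂ) - 3, 2 * (q : ℂ) - 3})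
    ∧ (I₁.card : ℚ) = ((q : ℚ) - 1) ^ 2 / 3
    ∧ (I₂.card : ℚ) = (q : ℚ) - 1
    ∧ I₃.card = 1 := by
  have hqC : (q : ℂ) ≠ 0 := Nat.cast_ne_zero.2 (by omega)
  have hlevel (I : Finset (ZMod N)) (c : ℂ) (v : ℕ) (hc : c = q * v - 3)
      (hI : ∀ x : ZMod N, x ∈ I ↔ η x.val = c) : I = ({x | T x.val = v} : Finset (ZMod N)) := by
    ext x
    rw [hI, mem_filter, hηT, hc]
    simp [hqC]
  rw [hlevel I₁ _ 0 (by simp) hI₁, hlevel I₂ _ 1 (by simp) hI₂, hlevel I₃ _ 2 (by ring) hI₃]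
  have hηsum (f : ℂ → ℂ) : ∑ x : ZMod N, f ((q : ℂ) * T x.val - 3) = ∑ a ∈ range N, f (η a) := by
    simp only [hηT]
    exact ZMod.sum_val_eq_sum_range N fun a => f (q * T a - 3)
  obtain ⟨hs1, hs2⟩ := sum_eq_and_sum_sq_eq_of_moments univ (fun x : ZMod N => T x.val)
    (by omega) (by rw [card_univ, ZMod.card, hN]) ((hηsum id).trans h1)
    ((hηsum (· ^ 2)).trans h2)
  obtain ⟨hc0, hc1, hc2⟩ := card_filter_eq_of_sum_eq_of_sum_sq_eq univ
    (fun (x : ZMod N) _ => hT x.val) hs1 hs2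
  rw [card_univ, ZMod.card] at hc0
  have hpos (v : ℕ) (hv : v ≤ 2) : 0 < #({x | T x.val = v} : Finset (ZMod N)) := by
    interval_cases v
    · nlinarith
    all_goals omega
  refine ⟨setOf_exists_lt_eq_of_levels hT hηT fun v hv => ?_, ?_,
    by rw [← hc1]; push_cast; ring, hc2⟩
  · obtain ⟨x, hx⟩ := card_pos.1 (hpos v hv)
    exact ⟨x.val, x.val_lt, (mem_filter.1 hx).2⟩
  · rw [eq_div_iff three_ne_zero]
    have h0 : ((#({x | T x.val = 0} : Finset (ZMod N)) : ℕ) : ℚ) + q = N := by exact_mod_cast hc0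
    have hNQ : 3 * (N : ℚ) = q ^ 2 + q + 1 := by exact_mod_cast hN
    linear_combination 3 * h0 + hNQ

theorem stmt_16_general
    (p m q k N : ℕ) [Fact p.Prime] (hm : 0 < m) (hq : q = p ^ m)
    (hq3 : q % 3 = 1) (hk : k = 3 * (q - 1)) (hN : N = (q ^ 3 - 1) / k)
    [NeZero N]
    (E : Type) [Field E] [Fintype E] [Algebra (ZMod p) E]
    (hcard : Fintype.card E = q ^ 3)
    (γ' : E) (hγ' : orderOf γ' = q ^ 3 - 1)
    -- γ = γ'^N generates the subgroup C₀ of order k = 3(q-1)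
    (γ : E) (hγ : γ = γ' ^ N)
    (ζ : ℂ) (hζ : IsPrimitiveRoot ζ p)
    (ψ : E → ℂ) (hψ : ∀ x, ψ x = ζ ^ (Algebra.trace (ZMod p) E x).val)
    (η : ℕ → ℂ)
    (hη : ∀ a, η a = ∑ j ∈ Finset.range k, ψ (γ' ^ (a + N * j)))
    (I₁ I₂ I₃ : Finset (ZMod N))
    (hI₁ : ∀ x : ZMod N, x ∈ I₁ ↔ η x.val = (-3 : ℂ))
    (hI₂ : ∀ x : ZMod N, x ∈ I₂ ↔ η x.val = (q : ℂ) - 3)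
    (hI₃ : ∀ x : ZMod N, x ∈ I₃ ↔ η x.val = 2 * (q : ℂ) - 3) :
    -- exactly the three values -3, q-3, 2q-3
    ({c : ℂ | ∃ a, a < N ∧ η a = c} = {(-3 : ℂ), (q : ℂ) - 3, 2 * (q : ℂ) - 3})
    -- multiplicities
    ∧ (I₁.card : ℚ) = ((q : ℚ) - 1) ^ 2 / 3
    ∧ (I₂.card : ℚ) = (q : ℚ) - 1
    ∧ I₃.card = 1 := by
  classical
  have : CharP E p := charP_of_injective_algebraMap (algebraMap (ZMod p) E).injective p
  have hq1 : 1 < q := hq ▸ Nat.one_lt_pow hm.ne' (Fact.out : p.Prime).one_lt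
  obtain ⟨hkN, h3N⟩ := mul_div_eq_and_three_mul_div_eq hq1 hq3
  rw [← hk, ← hN, ← hcard] at hkN
  rw [← hk, ← hN] at h3N
  rw [← hcard] at hγ'
  have hγord : orderOf γ = k :=
    hγ ▸ orderOf_pow_of_orderOf_eq_mul (NeZero.ne N) (by rw [hγ', ← hkN, mul_comm])
  subst hq hk
  let χ : AddChar E ℂ := (AddChar.zmodChar p hζ.pow_eq_one).compAddMonoidHom
    (Algebra.trace (ZMod p) E).toAddMonoidHom
  have hχ : χ.IsPrimitive := AddChar.isPrimitive_zmodChar_comp_trace p E hζ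
  obtain rfl : ψ = χ := funext hψ
  have hηχ (a : ℕ) : η a = ∑ j ∈ range (3 * (p ^ m - 1)), χ (γ' ^ a * γ ^ j) := by
    rw [hη, hγ]
    simp only [pow_add, pow_mul]
  have hγ'0 := ne_zero_of_orderOf_eq_card_sub_one hγ'
  refine values_and_card_levels_of_moments hq1 h3N
    (T := fun a => numTrivialLines χ p m γ (γ' ^ a))
    (fun a => numTrivialLines_le_two hχ hq1 hcard hγord (pow_ne_zero a hγ'0))
    (fun a => by rw [hηχ, sum_range_mul_pow_eq_numTrivialLines hq1 hγord]) ?_ ?_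
    I₁ I₂ I₃ hI₁ hI₂ hI₃
  · simp only [hηχ]
    exact sum_range_sum_range_pow_mul_pow hχ hγ' hγ hkN
  · simp only [hηχ]
    rw [sum_range_sq_sum_range_pow_mul_pow hχ hγ' hγ hkN, card_filter_pow_eq_neg_one hq1 hγord,
      hcard]
    push_cast [Nat.cast_sub hq1.le]
    ring

/-- Subsection 4.3, examples from a union of 1-dimensional
subspaces.  Let `q ≡ 1 (mod 3)` be a prime power, `k = 3(q-1)`, `N = (q³-1)/k`, and
assume `ord_k(q) = 3`.  Then the Gauss periods of order `N` of `F_{q³}` take exactly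
the three values `-3, q-3, 2q-3` (an arithmetic progression with common difference
`q`), with multiplicities `|I₁| = (q-1)²/3`, `|I₂| = q-1`, `|I₃| = 1`. -/
theorem stmt_16
    (p m q k N : ℕ) [Fact p.Prime] (hm : 0 < m) (hq : q = p ^ m)
    (hq3 : q % 3 = 1) (hk : k = 3 * (q - 1)) (hN : N = (q ^ 3 - 1) / k)
    [NeZero N] [NeZero k]
    -- the multiplicative order of q modulo k equals 3
    (hord : orderOf ((q : ZMod k)) = 3)
    (E : Type) [Field E] [Fintype E] [Algebra (ZMod p) E]
    (hcard : Fintype.card E = q ^ 3)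
    (γ' : E) (hγ' : orderOf γ' = q ^ 3 - 1)
    -- γ = γ'^N generates the subgroup C₀ of order k = 3(q-1)
    (γ : E) (hγ : γ = γ' ^ N)
    (ζ : ℂ) (hζ : IsPrimitiveRoot ζ p)
    (ψ : E → ℂ) (hψ : ∀ x, ψ x = ζ ^ (Algebra.trace (ZMod p) E x).val)
    (η : ℕ → ℂ)
    (hη : ∀ a, η a = ∑ j ∈ Finset.range k, ψ (γ' ^ (a + N * j)))
    (I₁ I₂ I₃ : Finset (ZMod N))
    (hI₁ : ∀ x : ZMod N, x ∈ I₁ ↔ η x.val = (-3 : ℂ))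
    (hI₂ : ∀ x : ZMod N, x ∈ I₂ ↔ η x.val = (q : ℂ) - 3)
    (hI₃ : ∀ x : ZMod N, x ∈ I₃ ↔ η x.val = 2 * (q : ℂ) - 3) :
    -- exactly the three values -3, q-3, 2q-3
    ({c : ℂ | ∃ a, a < N ∧ η a = c} = {(-3 : ℂ), (q : ℂ) - 3, 2 * (q : ℂ) - 3})
    -- multiplicities
    ∧ (I₁.card : ℚ) = ((q : ℚ) - 1) ^ 2 / 3
    ∧ (I₂.card : ℚ) = (q : ℚ) - 1
    ∧ I₃.card = 1 :=
  stmt_16_general p m q k N hm hq hq3 hk hN E hcard γ' hγ' γ hγ ζ hζ ψ hψ η hη I₁ I₂ I₃ hI₁ hI₂ hI₃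
end
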